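/- arXiv:0807.4776 — 3 statements merged into one kernel-verified Lean document; each statement's English description precedes it below -/
import Mathlib

section
/- For every z ∈ Z(U(sl₂)) and every n ≥ 1, the following identities hold in H_z: [Δⁿ, x] = (f_n(Δ)·h + g_n(Δ))·x + 2·f_n(Δ)·e·y, and [Δⁿ, y] = 2·f_n(Δ)·f·x + (g_n(Δ) − f_n(Δ)·h)·y. -/
open Polynomial

inductive HGen : Type | E | F | H | X | Y

noncomputable section

namespace InfHecke

variable (k : Type) [Field k]

abbrev FA := FreeAlgebra k HGen

def fe : FA k := FreeAlgebra.ι k HGen.E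
def ff : FA k := FreeAlgebra.ι k HGen.F
def fh : FA k := FreeAlgebra.ι k HGen.H
def fx : FA k := FreeAlgebra.ι k HGen.X
def fy : FA k := FreeAlgebra.ι k HGen.Y

/-- (a multiple of) the Casimir element, in the free algebra. -/
def fΔ : FA k := fh k * fh k + 4 * (fe k * ff k) - 2 * fh k

/-- The defining relations of the infinitesimal Hecke algebra `H_z` of `sl₂`,
with deformation parameter `z = p(Δ)` for a polynomial `p`. -/
inductive Rel (p : Polynomial k) : FA k → FA k → Prop
  | he : Rel p (fh k * fe k - fe k * fh k) (2 * fe k)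
  | hf : Rel p (fh k * ff k - ff k * fh k) (-(2 * ff k))
  | ef : Rel p (fe k * ff k - ff k * fe k) (fh k)
  | ex : Rel p (fe k * fx k - fx k * fe k) 0
  | ey : Rel p (fe k * fy k - fy k * fe k) (fx k)
  | fxr : Rel p (ff k * fx k - fx k * ff k) (fy k)
  | fyr : Rel p (ff k * fy k - fy k * ff k) 0
  | hx : Rel p (fh k * fx k - fx k * fh k) (fx k)
  | hy : Rel p (fh k * fy k - fy k * fh k) (-(fy k))
  | xy : Rel p (fx k * fy k - fy k * fx k) (Polynomial.aeval (fΔ k) p)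

/-- The infinitesimal Hecke algebra `H_z` of `sl₂`, with `z = p(Δ)`. -/
abbrev Hecke (p : Polynomial k) := RingQuot (Rel k p)

variable (p : Polynomial k)

def eH : Hecke k p := (RingQuot.mkAlgHom k (Rel k p)) (fe k)
def fH : Hecke k p := (RingQuot.mkAlgHom k (Rel k p)) (ff k)
def hH : Hecke k p := (RingQuot.mkAlgHom k (Rel k p)) (fh k)
def xH : Hecke k p := (RingQuot.mkAlgHom k (Rel k p)) (fx k)
def yH : Hecke k p := (RingQuot.mkAlgHom k (Rel k p)) (fy k)

/-- The Casimir element `Δ = h² + 4ef − 2h` in `H_z`. -/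
def ΔH : Hecke k p := (RingQuot.mkAlgHom k (Rel k p)) (fΔ k)

/-- The deformation parameter `z = p(Δ)`, as an element of `H_z`. -/
def zH : Hecke k p := Polynomial.aeval (ΔH k p) p

/-- The element `t = ey² + hxy − fx²`. -/
def tH : Hecke k p := eH k p * yH k p ^ 2 + hH k p * xH k p * yH k p - fH k p * xH k p ^ 2

/-- The polynomial representing `q_z = (1/4)(z − Δz − z₀)`, where `z₀ = p0(Δ)`. -/
def qpoly (p0 : Polynomial k) : Polynomial k :=
  Polynomial.C (1/4 : k) * (p - Polynomial.X * p - p0)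

/-- The condition that `z₀ = p0(Δ)` satisfies `[z₀, x] = Δxz − zxΔ` in `H_z`. -/
def IsZ0 (p0 : Polynomial k) : Prop :=
  Polynomial.aeval (ΔH k p) p0 * xH k p - xH k p * Polynomial.aeval (ΔH k p) p0
    = ΔH k p * xH k p * zH k p - zH k p * xH k p * ΔH k p

/-- The central element `t_z = t − (1/2)hz − q_z` of `H_z`. -/
def tz (p0 : Polynomial k) : Hecke k p :=
  tH k p - (1/2 : k) • (hH k p * zH k p) - Polynomial.aeval (ΔH k p) (qpoly k p p0)

/-- The polynomial `φ_z(s) = ((1/2)s + 1)·z(s²+2s) − q_z(s²+2s)`. -/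
def phiz (p0 : Polynomial k) : Polynomial k :=
  (Polynomial.C (1/2 : k) * Polynomial.X + 1) * p.comp (Polynomial.X ^ 2 + 2 * Polynomial.X)
    - (qpoly k p p0).comp (Polynomial.X ^ 2 + 2 * Polynomial.X)

/-- The left ideal of `H_z` generated by `e`, `x` and `h − λ`. -/
def VermaIdeal (lam : k) : Ideal (Hecke k p) :=
  Ideal.span {eH k p, xH k p, hH k p - algebraMap k (Hecke k p) lam}

/-- The Verma module `M(λ)` over `H_z`. -/
abbrev Verma (lam : k) := Hecke k p ⧸ VermaIdeal k p lam

/-- The (unique) maximal proper submodule of the Verma module `M(λ)`. -/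
def VermaRad (lam : k) : Submodule (Hecke k p) (Verma k p lam) :=
  sSup {N : Submodule (Hecke k p) (Verma k p lam) | N ≠ ⊤}

/-- The simple highest-weight module `V(λ)`, the irreducible quotient of `M(λ)`. -/
abbrev SimpleQuot (lam : k) := Verma k p lam ⧸ VermaRad k p lam

/-- The `k`-linear span of all commutators `ab − ba` in `H_z`. -/
def commSpace : Submodule k (Hecke k p) :=
  Submodule.span k {c : Hecke k p | ∃ a b : Hecke k p, c = a * b - b * a}

/-- The polynomials `f_n` (for `n ≥ 1`), defined together with `g_n` by the mutual
recursion `f₁ = 2`, `g₁ = −3`, `f_{n+1} = 2Tⁿ + (T−1)f_n − 2g_n`,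
`g_{n+1} = −3Tⁿ + (T+3)g_n − 2T·f_n`. -/
def fgAux : ℕ → Polynomial k × Polynomial k
  | 0 => (Polynomial.C 2, Polynomial.C (-3))
  | n + 1 =>
      ((2 : Polynomial k) * Polynomial.X ^ (n + 1)
          + (Polynomial.X - 1) * (fgAux n).1 - 2 * (fgAux n).2,
        (-3 : Polynomial k) * Polynomial.X ^ (n + 1)
          + (Polynomial.X + 3) * (fgAux n).2 - 2 * Polynomial.X * (fgAux n).1)

def fP (n : ℕ) : Polynomial k := (fgAux k (n - 1)).1
def gP (n : ℕ) : Polynomial k := (fgAux k (n - 1)).2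

/-!
The relations of `sl₂ ⋉ V` are invariant under `e ↔ f`, `h ↦ -h`, `x ↔ y`, and so is
`Δ = h² + 4ef - 2h`; the identity for `[Δⁿ, y]` is therefore the identity for `[Δⁿ, x]` of the
swapped generators. Since `Δ` commutes with `e, f, h`, the Leibniz rule gives, for `D = Δⁿ`,
`[ΔD, x] = Δ[D, x] + D[Δ, x] - (2h - 3)[D, x] - 4e[D, y]`. Inserting `[Δ, x] = (2h - 3)x + 4ey`
and the identities for `D`, and reducing with `h² + 4ef = Δ + 2h` and `[h, e] = 2e`, produces
exactly the recursion defining `f_{n+1}` and `g_{n+1}`.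
-/

section Sl2Relations

variable {A : Type*} [Ring A]

theorem mul_mul_of_mul_eq {a b c : A} (hab : a * b = c) (t : A) : a * (b * t) = c * t := by
  rw [← mul_assoc, hab]

structure IsSl2Rel (e f h : A) : Prop where
  h_mul_e : h * e = e * h + 2 • e
  h_mul_f : h * f = f * h - 2 • f
  f_mul_e : f * e = e * f - h

/-- The relations of `sl₂ ⋉ V`, `V = kx ⊕ ky`, oriented so that as rewrite rules they bring
words into the PBW order `e, f, h, x, y`. -/
structure IsSl2StdRepRel (e f h x y : A) : Prop extends IsSl2Rel e f h where
  x_mul_e : x * e = e * x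
  y_mul_e : y * e = e * y - x
  x_mul_f : x * f = f * x - y
  y_mul_f : y * f = f * y
  x_mul_h : x * h = h * x - x
  y_mul_h : y * h = h * y + y

def casimir (e f h : A) : A := h * h + 4 • (e * f) - 2 • h

variable {e f h x y : A}

namespace IsSl2Rel

variable (H : IsSl2Rel e f h)
include H

theorem swap : IsSl2Rel f e (-h) where
  h_mul_e := by rw [neg_mul, mul_neg, H.h_mul_f]; abel
  h_mul_f := by rw [neg_mul, mul_neg, H.h_mul_e]; abel
  f_mul_e := by rw [H.f_mul_e]; abel

theorem casimir_swap : casimir f e (-h) = casimir e f h := by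
  rw [casimir, casimir, H.f_mul_e]; noncomm_ring

theorem commute_casimir_e : Commute (casimir e f h) e := by
  simp only [Commute, SemiconjBy, casimir, mul_add, add_mul, mul_sub, sub_mul, mul_assoc,
    smul_mul_assoc, mul_smul_comm, smul_add, smul_sub, smul_smul, H.h_mul_e, H.f_mul_e,
    mul_mul_of_mul_eq H.h_mul_e]
  noncomm_ring

theorem commute_casimir_f : Commute (casimir e f h) f := by
  simpa only [H.casimir_swap] using H.swap.commute_casimir_e

theorem commute_casimir_h : Commute (casimir e f h) h := by
  simp only [Commute, SemiconjBy, casimir, mul_add, add_mul, mul_sub, sub_mul, mul_assoc,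
    smul_mul_assoc, mul_smul_comm, smul_add, smul_sub, smul_smul, H.h_mul_f,
    mul_mul_of_mul_eq H.h_mul_e]
  noncomm_ring

end IsSl2Rel

namespace IsSl2StdRepRel

variable (H : IsSl2StdRepRel e f h x y)
include H

theorem swap : IsSl2StdRepRel f e (-h) y x where
  toIsSl2Rel := H.toIsSl2Rel.swap
  x_mul_e := H.y_mul_f
  y_mul_e := H.x_mul_f
  x_mul_f := H.y_mul_e
  y_mul_f := H.x_mul_e
  x_mul_h := by rw [mul_neg, neg_mul, H.y_mul_h]; abel
  y_mul_h := by rw [mul_neg, neg_mul, H.x_mul_h]; abel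

theorem casimir_mul_sub_mul_casimir :
    casimir e f h * x - x * casimir e f h = (2 • h - 3) * x + 4 • (e * y) := by
  simp only [casimir, mul_add, add_mul, mul_sub, sub_mul, mul_assoc, smul_mul_assoc,
    mul_smul_comm, smul_sub, H.x_mul_f, H.x_mul_h, mul_mul_of_mul_eq H.x_mul_e,
    mul_mul_of_mul_eq H.x_mul_h]
  noncomm_ring

end IsSl2StdRepRel

end Sl2Relations

section CommutatorFormula

variable {R : Type*} [CommRing R] {A : Type*} [Ring A] [Algebra R A] {e f h x y : A}

def CasimirCommutatorFormula (Δ e h x y : A) (P F G : R[X]) : Prop :=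
  aeval Δ P * x - x * aeval Δ P = (aeval Δ F * h + aeval Δ G) * x + 2 • (aeval Δ F * (e * y))

theorem IsSl2Rel.commute_aeval_casimir (H : IsSl2Rel e f h) (Q : R[X]) :
    Commute (aeval (casimir e f h) Q) e ∧ Commute (aeval (casimir e f h) Q) f ∧
      Commute (aeval (casimir e f h) Q) h := by
  have hQ := aeval_mem_adjoin_singleton R (casimir e f h) (p := Q)
  exact ⟨(Algebra.commute_of_mem_adjoin_singleton_of_commute hQ H.commute_casimir_e.symm).symm,
    (Algebra.commute_of_mem_adjoin_singleton_of_commute hQ H.commute_casimir_f.symm).symm,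
    (Algebra.commute_of_mem_adjoin_singleton_of_commute hQ H.commute_casimir_h.symm).symm⟩

theorem IsSl2StdRepRel.casimirCommutatorFormula_X (H : IsSl2StdRepRel e f h x y) :
    CasimirCommutatorFormula (casimir e f h) e h x y X (C 2 : R[X]) (C (-3)) := by
  simp only [CasimirCommutatorFormula, aeval_X, map_ofNat, map_neg,
    H.casimir_mul_sub_mul_casimir]
  noncomm_ring

theorem CasimirCommutatorFormula.X_mul (H : IsSl2StdRepRel e f h x y) {P F G : R[X]}
    (hx : CasimirCommutatorFormula (casimir e f h) e h x y P F G)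
    (hy : CasimirCommutatorFormula (casimir e f h) f (-h) y x P F G) :
    CasimirCommutatorFormula (casimir e f h) e h x y (X * P)
      (2 * P + (X - 1) * F - 2 * G) (-3 * P + (X + 3) * G - 2 * X * F) := by
  set Δ := casimir e f h
  have hΔx := H.casimir_mul_sub_mul_casimir
  obtain ⟨hDe, -, hDh⟩ := H.commute_aeval_casimir P
  obtain ⟨hFe, hFf, hFh⟩ := H.commute_aeval_casimir F
  obtain ⟨hGe, hGf, hGh⟩ := H.commute_aeval_casimir G
  unfold CasimirCommutatorFormula at *
  simp only [map_mul, map_add, map_sub, map_ofNat, map_neg, aeval_X, map_one]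
  set D := aeval Δ P
  set a := aeval Δ F
  set b := aeval Δ G
  calc Δ * D * x - x * (Δ * D) = Δ * (D * x - x * D) + (Δ * x - x * Δ) * D := by noncomm_ring
    _ = Δ * (D * x - x * D) + D * (Δ * x - x * Δ) - (2 • h - 3) * (D * x - x * D)
          - 4 • (e * (D * y - y * D)) := by
        rw [hΔx]
        simp only [mul_sub, sub_mul, add_mul, mul_add, mul_assoc, smul_mul_assoc, mul_smul_comm,
          mul_mul_of_mul_eq hDh.eq, mul_mul_of_mul_eq hDe.eq]
        noncomm_ring
    _ = Δ * ((a * h + b) * x + 2 • (a * (e * y))) + D * ((2 • h - 3) * x + 4 • (e * y))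
          - (2 • h - 3) * ((a * h + b) * x + 2 • (a * (e * y)))
          - 4 • (e * ((a * -h + b) * y + 2 • (a * (f * x)))) := by rw [hx, hy, hΔx]
    _ = _ := by
        clear_value D a b
        simp only [Δ, casimir, mul_sub, sub_mul, add_mul, mul_add, mul_assoc, smul_mul_assoc,
          mul_smul_comm, smul_add, smul_sub, mul_neg, neg_mul, hFf.eq.symm, hFh.eq.symm,
          hGf.eq.symm, hGh.eq.symm, mul_mul_of_mul_eq hFe.eq.symm, mul_mul_of_mul_eq hFf.eq.symm,
          mul_mul_of_mul_eq hFh.eq.symm, mul_mul_of_mul_eq hGe.eq.symm,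
          mul_mul_of_mul_eq hGf.eq.symm, mul_mul_of_mul_eq hGh.eq.symm,
          mul_mul_of_mul_eq H.h_mul_e, mul_mul_of_mul_eq H.f_mul_e]
        noncomm_ring

end CommutatorFormula

section Hecke

variable {k : Type} [Field k] {p : Polynomial k}

theorem mkAlgHom_mul_eq_of_rel {a b c : FA k} (hr : Rel k p (a * b - b * a) c) :
    RingQuot.mkAlgHom k (Rel k p) a * RingQuot.mkAlgHom k (Rel k p) b =
      RingQuot.mkAlgHom k (Rel k p) b * RingQuot.mkAlgHom k (Rel k p) a +
        RingQuot.mkAlgHom k (Rel k p) c := by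
  rw [← sub_eq_iff_eq_add', ← map_mul, ← map_mul, ← map_sub, RingQuot.mkAlgHom_rel k hr]

theorem isSl2StdRepRel_hecke : IsSl2StdRepRel (eH k p) (fH k p) (hH k p) (xH k p) (yH k p) where
  h_mul_e := by
    rw [hH, eH, mkAlgHom_mul_eq_of_rel Rel.he, map_mul, map_ofNat, nsmul_eq_mul, Nat.cast_ofNat]
  h_mul_f := by
    rw [hH, fH, mkAlgHom_mul_eq_of_rel Rel.hf, map_neg, map_mul, map_ofNat, nsmul_eq_mul,
      Nat.cast_ofNat, sub_eq_add_neg]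
  f_mul_e := by rw [eH, fH, hH, eq_sub_iff_add_eq, mkAlgHom_mul_eq_of_rel Rel.ef]
  x_mul_e := by rw [eH, xH, mkAlgHom_mul_eq_of_rel Rel.ex, map_zero, add_zero]
  y_mul_e := by rw [eH, xH, yH, mkAlgHom_mul_eq_of_rel Rel.ey]; abel
  x_mul_f := by rw [fH, xH, yH, mkAlgHom_mul_eq_of_rel Rel.fxr]; abel
  y_mul_f := by rw [fH, yH, mkAlgHom_mul_eq_of_rel Rel.fyr, map_zero, add_zero]
  x_mul_h := by rw [hH, xH, mkAlgHom_mul_eq_of_rel Rel.hx]; abel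
  y_mul_h := by rw [hH, yH, mkAlgHom_mul_eq_of_rel Rel.hy, map_neg]; abel

theorem ΔH_eq_casimir : ΔH k p = casimir (eH k p) (fH k p) (hH k p) := by
  simp only [ΔH, fΔ, casimir, map_sub, map_add, map_mul, map_ofNat, nsmul_eq_mul, Nat.cast_ofNat]
  rfl

end Hecke

section Powers

variable {A : Type*} [Ring A] [Algebra k A] {e f h x y : A}

theorem IsSl2StdRepRel.casimirCommutatorFormula_X_pow (H : IsSl2StdRepRel e f h x y) (n : ℕ) :
    CasimirCommutatorFormula (casimir e f h) e h x y (X ^ (n + 1)) (fgAux k n).1 (fgAux k n).2 ∧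
      CasimirCommutatorFormula (casimir e f h) f (-h) y x (X ^ (n + 1))
        (fgAux k n).1 (fgAux k n).2 := by
  induction n with
  | zero =>
    rw [zero_add, pow_one, fgAux]
    exact ⟨H.casimirCommutatorFormula_X, H.casimir_swap ▸ H.swap.casimirCommutatorFormula_X⟩
  | succ n ih =>
    obtain ⟨ihx, ihy⟩ := ih
    rw [pow_succ', fgAux]
    refine ⟨ihx.X_mul H ihy, ?_⟩
    have hy := (H.casimir_swap.symm ▸ ihy).X_mul H.swap (by rwa [neg_neg, H.casimir_swap])
    rwa [H.casimir_swap] at hy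

theorem IsSl2StdRepRel.casimir_pow_commutators (H : IsSl2StdRepRel e f h x y) (n : ℕ) :
    casimir e f h ^ (n + 1) * x - x * casimir e f h ^ (n + 1)
      = (aeval (casimir e f h) (fgAux k n).1 * h + aeval (casimir e f h) (fgAux k n).2) * x
        + 2 * aeval (casimir e f h) (fgAux k n).1 * (e * y) ∧
    casimir e f h ^ (n + 1) * y - y * casimir e f h ^ (n + 1)
      = 2 * aeval (casimir e f h) (fgAux k n).1 * (f * x)
        + (aeval (casimir e f h) (fgAux k n).2 - aeval (casimir e f h) (fgAux k n).1 * h) * y := by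
  obtain ⟨hx, hy⟩ := H.casimirCommutatorFormula_X_pow k n
  simp only [CasimirCommutatorFormula, aeval_X_pow] at hx hy
  rw [hx, hy]
  constructor <;> noncomm_ring

end Powers

theorem casimir_power_commutators
    (p : Polynomial k) (n : ℕ) (hn : 1 ≤ n) :
    ΔH k p ^ n * xH k p - xH k p * ΔH k p ^ n
      = (Polynomial.aeval (ΔH k p) (fP k n) * hH k p
          + Polynomial.aeval (ΔH k p) (gP k n)) * xH k p
        + 2 * Polynomial.aeval (ΔH k p) (fP k n) * (eH k p * yH k p) ∧
    ΔH k p ^ n * yH k p - yH k p * ΔH k p ^ n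
      = 2 * Polynomial.aeval (ΔH k p) (fP k n) * (fH k p * xH k p)
        + (Polynomial.aeval (ΔH k p) (gP k n)
            - Polynomial.aeval (ΔH k p) (fP k n) * hH k p) * yH k p := by
  obtain ⟨m, rfl⟩ := Nat.exists_eq_add_of_le' hn
  simpa only [fP, gP, Nat.add_sub_cancel, ΔH_eq_casimir] using
    (isSl2StdRepRel_hecke (p := p)).casimir_pow_commutators k m

end InfHecke

end
end

section
/- The polynomials f_n, g_n satisfy: f₂(T) = 4(T+1), g₂(T) = −10T − 9, and for all n ≥ 1 the second-order recurrences f_{n+2}(T) = (2T+2)·f_{n+1}(T) − (T² − 2T − 3)·f_n(T) and g_{n+2}(T) = (2T+2)·g_{n+1}(T) − (4T^{n+1} + 3Tⁿ) − (T² − 2T − 3)·g_n(T). -/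
open Polynomial

noncomputable section

namespace InfHecke

variable (k : Type) [Field k]

variable (p : Polynomial k)

/-!
The pair `vₙ = (fₙ, gₙ)` satisfies `vₙ₊₁ = A vₙ + Tⁿ (2, −3)` with `A = !![T−1, −2; −2T, T+3]`.
By Cayley–Hamilton, `A² = (tr A) A − det A = (2T+2) A − (T² − 2T − 3)`, so eliminating one
coordinate gives a second-order recurrence for the other; the inhomogeneous term is
`Tⁿ (A + T − tr A)(2, −3) = Tⁿ (0, −(4T + 3))`.
-/

section PairRecurrence

variable {R : Type*} [CommRing R] {a b c d : R} {f g u v : ℕ → R}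

theorem fst_second_order_of_pair_recurrence
    (hf : ∀ n, f (n + 1) = a * f n + b * g n + u n)
    (hg : ∀ n, g (n + 1) = c * f n + d * g n + v n) (n : ℕ) :
    f (n + 2) = (a + d) * f (n + 1) - (a * d - b * c) * f n
      + (u (n + 1) - d * u n + b * v n) := by
  linear_combination hf (n + 1) + b * hg n - d * hf n

theorem snd_second_order_of_pair_recurrence
    (hf : ∀ n, f (n + 1) = a * f n + b * g n + u n)
    (hg : ∀ n, g (n + 1) = c * f n + d * g n + v n) (n : ℕ) :
    g (n + 2) = (a + d) * g (n + 1) - (a * d - b * c) * g n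
      + (v (n + 1) - a * v n + c * u n) := by
  linear_combination fst_second_order_of_pair_recurrence (f := g) (g := f) (u := v) (v := u)
    (a := d) (b := c) (c := b) (d := a)
    (fun n ↦ (hg n).trans (by ring)) (fun n ↦ (hf n).trans (by ring)) n

end PairRecurrence

theorem fP_one : fP k 1 = 2 := by
  simp [fP, fgAux, C_ofNat]

theorem gP_one : gP k 1 = -3 := by
  simp [gP, fgAux, C_ofNat]

theorem fP_add_two (n : ℕ) :
    fP k (n + 2) = (X - 1) * fP k (n + 1) + (-2) * gP k (n + 1) + 2 * X ^ (n + 1) := by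
  simp only [fP, gP, Nat.add_sub_cancel, Nat.add_succ_sub_one, fgAux]
  ring

theorem gP_add_two (n : ℕ) :
    gP k (n + 2) = (-2 * X) * fP k (n + 1) + (X + 3) * gP k (n + 1) + (-3) * X ^ (n + 1) := by
  simp only [fP, gP, Nat.add_sub_cancel, Nat.add_succ_sub_one, fgAux]
  ring

/-- `f₂(T) = 4(T+1)`, `g₂(T) = −10T − 9`, and for all `n ≥ 1`:
`f_{n+2} = (2T+2)f_{n+1} − (T² − 2T − 3)f_n` and
`g_{n+2} = (2T+2)g_{n+1} − (4T^{n+1} + 3Tⁿ) − (T² − 2T − 3)g_n`. -/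
theorem fg_second_order_recurrences :
    fP k 2 = 4 * (Polynomial.X + 1) ∧
    gP k 2 = -10 * Polynomial.X - 9 ∧
    (∀ n : ℕ, 1 ≤ n →
      fP k (n + 2) = (2 * Polynomial.X + 2) * fP k (n + 1)
        - (Polynomial.X ^ 2 - 2 * Polynomial.X - 3) * fP k n) ∧
    (∀ n : ℕ, 1 ≤ n →
      gP k (n + 2) = (2 * Polynomial.X + 2) * gP k (n + 1)
        - (4 * Polynomial.X ^ (n + 1) + 3 * Polynomial.X ^ n)
        - (Polynomial.X ^ 2 - 2 * Polynomial.X - 3) * gP k n) := by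
  have hf := fP_add_two k
  have hg := gP_add_two k
  have hf₂ := fst_second_order_of_pair_recurrence (f := fun n ↦ fP k (n + 1))
    (g := fun n ↦ gP k (n + 1)) hf hg
  have hg₂ := snd_second_order_of_pair_recurrence (f := fun n ↦ fP k (n + 1))
    (g := fun n ↦ gP k (n + 1)) hf hg
  refine ⟨?_, ?_, ?_, ?_⟩
  · rw [hf 0, fP_one, gP_one]; ring
  · rw [hg 0, fP_one, gP_one]; ring
  · rintro (_ | n) hn
    · omega
    · linear_combination hf₂ n
  · rintro (_ | n) hn
    · omega
    · linear_combination hg₂ n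

end InfHecke

end
end

section
/- Let z ∈ Z(U(sl₂)) be the parameter of H_z. For all w, w' ∈ Z(U(sl₂)) there exists w₀ ∈ Z(U(sl₂)) such that [w₀, x] = w·x·w' − w'·x·w in H_z (equivalently [w₀,x] = w'[w,x] − w[w',x]). Moreover, if w = c₁Δ^m + (terms of lower degree in Δ) and w' = c₂Δⁿ + (terms of lower degree in Δ) with m + n ≥ 1, then w₀ can be chosen of the form c₁c₂·((m−n)/(m+n))·Δ^{m+n} + (terms of lower degree in Δ). -/
open Polynomial

noncomputable section

namespace InfHecke

variable (k : Type) [Field k]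

variable (p : Polynomial k)

/-!
Write `L` and `R` for left and right multiplication by `Δ`; they commute, and normal ordering in
`U(sl₂ ⋉ V)` shows that `x` is killed by `(L - R)² - 2(L + R) - 3`. Both sides of
`[w₀, x] = w x w' - w' x w` are polynomials in `L, R` applied to `x`, namely `w₀(L) - w₀(R)` and
`w(L) w'(R) - w'(L) w(R)`, so it suffices that they agree on that conic. The conic is rational,
`(L, R) = (s² + s - 3/4, s² - s - 3/4)`, and after this substitution the right side becomes an odd
polynomial in `s` of degree `< 2(m + n)`. The polynomials `L(s)ⁱ - R(s)ⁱ` are odd of degree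
`2i - 1` with leading coefficient `2i`, so they span the odd polynomials, which gives `w₀`;
comparing the coefficients of `s^(2(m+n)-1)` gives its leading coefficient.
-/

section ParamConic

/-- `paramL s = (s + 1/2)² - 1` and `paramR s = (s - 1/2)² - 1` are the values of
`Δ = (h + 1)² - 1 + 4fe` on highest weight vectors whose weights differ by one. -/
def paramL : k[X] := X ^ 2 + X - C (3 / 4)

def paramR : k[X] := X ^ 2 - X - C (3 / 4)

variable {k}

theorem paramL_comp_neg_X : (paramL k).comp (-X) = paramR k := by
  simp only [paramL, paramR, sub_comp, add_comp, pow_comp, X_comp, C_comp]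
  ring

theorem paramR_comp_neg_X : (paramR k).comp (-X) = paramL k := by
  simp only [paramL, paramR, sub_comp, pow_comp, X_comp, C_comp]
  ring

theorem paramR_comp_one_sub_X : (paramR k).comp (1 - X) = paramR k := by
  simp only [paramR, sub_comp, pow_comp, X_comp, C_comp]
  ring

theorem paramL_sub_paramL_comp_one_sub_X : paramL k - (paramL k).comp (1 - X) = 4 * X - 2 := by
  simp only [paramL, sub_comp, add_comp, pow_comp, X_comp, C_comp]
  ring

theorem monic_paramL : (paramL k).Monic := by unfold paramL; monicity!

theorem monic_paramR : (paramR k).Monic := by unfold paramR; monicity!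

theorem natDegree_paramL : (paramL k).natDegree = 2 := by unfold paramL; compute_degree!

theorem natDegree_paramR : (paramR k).natDegree = 2 := by unfold paramR; compute_degree!

theorem nextCoeff_paramL : (paramL k).nextCoeff = 1 := by
  rw [nextCoeff_of_natDegree_pos (by rw [natDegree_paramL]; norm_num), natDegree_paramL]
  simp [paramL, coeff_X]

theorem nextCoeff_paramR : (paramR k).nextCoeff = -1 := by
  rw [nextCoeff_of_natDegree_pos (by rw [natDegree_paramR]; norm_num), natDegree_paramR]
  simp [paramR, coeff_X]

theorem natDegree_paramL_pow_mul_paramR_pow (i j : ℕ) :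
    (paramL k ^ i * paramR k ^ j).natDegree = 2 * (i + j) := by
  rw [((monic_paramL (k := k)).pow i).natDegree_mul (monic_paramR.pow j), natDegree_pow,
    natDegree_pow, natDegree_paramL, natDegree_paramR]
  ring

theorem coeff_paramL_pow_mul_paramR_pow {i j : ℕ} (hij : 1 ≤ i + j) :
    (paramL k ^ i * paramR k ^ j).coeff (2 * (i + j) - 1) = i - j := by
  have hnext := ((monic_paramL (k := k)).pow i).nextCoeff_mul (monic_paramR.pow j)
  rw [monic_paramL.nextCoeff_pow, monic_paramR.nextCoeff_pow, nextCoeff_paramL,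
    nextCoeff_paramR, nextCoeff_of_natDegree_pos
      (by rw [natDegree_paramL_pow_mul_paramR_pow]; omega),
    natDegree_paramL_pow_mul_paramR_pow] at hnext
  rw [hnext]
  ring

theorem natDegree_comp_paramL_mul_comp_paramR_le {w w' : k[X]} {m n : ℕ}
    (hw : w.natDegree ≤ m) (hw' : w'.natDegree ≤ n) :
    (w.comp (paramL k) * w'.comp (paramR k)).natDegree ≤ 2 * (m + n) := by
  have hL := natDegree_comp_le (p := w) (q := paramL k)
  have hR := natDegree_comp_le (p := w') (q := paramR k)
  rw [natDegree_paramL] at hL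
  rw [natDegree_paramR] at hR
  exact natDegree_mul_le.trans (by omega)

theorem coeff_comp_paramL_mul_comp_paramR {w w' : k[X]} {m n : ℕ} (hmn : 1 ≤ m + n)
    (hw : w.natDegree ≤ m) (hw' : w'.natDegree ≤ n) :
    (w.comp (paramL k) * w'.comp (paramR k)).coeff (2 * (m + n) - 1)
      = w.coeff m * w'.coeff n * (m - n) := by
  have hterm : ∀ i j, (C (w.coeff i) * paramL k ^ i * (C (w'.coeff j) * paramR k ^ j)).coeff
      (2 * (m + n) - 1)
        = w.coeff i * w'.coeff j * (paramL k ^ i * paramR k ^ j).coeff (2 * (m + n) - 1) := by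
    intro i j
    rw [mul_mul_mul_comm, ← C_mul, coeff_C_mul]
  have hlow : ∀ i j, i + j < m + n →
      (paramL k ^ i * paramR k ^ j).coeff (2 * (m + n) - 1) = 0 := fun i j h =>
    coeff_eq_zero_of_natDegree_lt (by rw [natDegree_paramL_pow_mul_paramR_pow]; omega)
  conv_lhs => rw [w.as_sum_range' (m + 1) (by omega), w'.as_sum_range' (n + 1) (by omega)]
  simp only [sum_comp, monomial_comp, Finset.sum_mul_sum, finsetSum_coeff, hterm]
  rw [Finset.sum_eq_single_of_mem m (by simp), Finset.sum_eq_single_of_mem n (by simp),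
    coeff_paramL_pow_mul_paramR_pow hmn]
  · intro j hj hjn
    rw [hlow m j (by simp at hj; omega), mul_zero]
  · intro i hi him
    exact Finset.sum_eq_zero fun j hj => by rw [hlow i j (by simp at hi hj; omega), mul_zero]

theorem coeff_eq_zero_of_comp_neg_X_eq_neg [CharZero k] {F : k[X]} (hF : F.comp (-X) = -F)
    {j : ℕ} (hj : Even j) : F.coeff j = 0 := by
  have h := congrArg (coeff · j) hF
  simp only [show (-X : k[X]) = C (-1) * X by simp, comp_C_mul_X_coeff, hj.neg_one_pow, mul_one,
    coeff_neg] at h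
  exact CharZero.eq_neg_self_iff.mp h

variable (k) in
def paramSkew (w w' : k[X]) : k[X] :=
  w.comp (paramL k) * w'.comp (paramR k) - w'.comp (paramL k) * w.comp (paramR k)

theorem paramSkew_comp_neg_X (w w' : k[X]) :
    (paramSkew k w w').comp (-X) = -paramSkew k w w' := by
  simp only [paramSkew, sub_comp, mul_comp, comp_assoc, paramL_comp_neg_X, paramR_comp_neg_X]
  ring

theorem natDegree_paramSkew_le {w w' : k[X]} {m n : ℕ} (hw : w.natDegree ≤ m)
    (hw' : w'.natDegree ≤ n) : (paramSkew k w w').natDegree ≤ 2 * (m + n) :=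
  (natDegree_sub_le _ _).trans <| max_le (natDegree_comp_paramL_mul_comp_paramR_le hw hw')
    ((natDegree_comp_paramL_mul_comp_paramR_le hw' hw).trans_eq (by ring))

theorem coeff_paramSkew {w w' : k[X]} {m n : ℕ} (hmn : 1 ≤ m + n) (hw : w.natDegree ≤ m)
    (hw' : w'.natDegree ≤ n) :
    (paramSkew k w w').coeff (2 * (m + n) - 1) = 2 * (m - n) * w.coeff m * w'.coeff n := by
  rw [paramSkew, coeff_sub, coeff_comp_paramL_mul_comp_paramR hmn hw hw', add_comm m n,
    coeff_comp_paramL_mul_comp_paramR (by omega) hw' hw]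
  ring

/-- `paramSkew k (X ^ i) 1 = L^i - R^i` is odd of degree `2i - 1`, so these span the odd
polynomials. -/
theorem exists_paramSkew_eq [CharZero k] (N : ℕ) {F : k[X]} (hodd : F.comp (-X) = -F)
    (hF : F.natDegree ≤ 2 * N) : ∃ c : k[X], c.natDegree ≤ N ∧ paramSkew k c 1 = F := by
  induction N generalizing F with
  | zero =>
    have hF0 : F = 0 := by
      rw [eq_C_of_natDegree_le_zero hF, coeff_eq_zero_of_comp_neg_X_eq_neg hodd Even.zero, C_0]
    exact ⟨0, by simp, by simp [paramSkew, hF0]⟩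
  | succ N ih =>
    set P := paramSkew k (X ^ (N + 1)) 1
    have hPcoeff : P.coeff (2 * N + 1) = 2 * (N + 1) := by
      have h := coeff_paramSkew (k := k) (m := N + 1) (n := 0) (by omega)
        (natDegree_X_pow_le _) natDegree_one.le
      rw [show 2 * (N + 1 + 0) - 1 = 2 * N + 1 by omega] at h
      simpa using h
    set a := F.coeff (2 * N + 1) / (2 * (N + 1))
    have hGodd : (F - C a * P).comp (-X) = -(F - C a * P) := by
      rw [sub_comp, mul_comp, C_comp, paramSkew_comp_neg_X, hodd]
      ring
    have hGdeg : (F - C a * P).natDegree ≤ 2 * (N + 1) :=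
      (natDegree_sub_le _ _).trans <| max_le hF <| (natDegree_C_mul_le _ _).trans <|
        (natDegree_paramSkew_le (natDegree_X_pow_le _) natDegree_one.le).trans_eq (by ring)
    obtain ⟨c, hc, hcG⟩ := ih hGodd <| by
      rw [natDegree_le_iff_coeff_eq_zero]
      intro j hj
      rcases (show j = 2 * N + 1 ∨ j = 2 * (N + 1) ∨ 2 * (N + 1) < j by omega) with rfl | rfl | hj
      · rw [coeff_sub, coeff_C_mul, hPcoeff,
          div_mul_cancel₀ _ (mul_ne_zero two_ne_zero (Nat.cast_add_one_ne_zero N)), sub_self]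
      · exact coeff_eq_zero_of_comp_neg_X_eq_neg hGodd (even_two_mul _)
      · exact coeff_eq_zero_of_natDegree_lt (by omega)
    refine ⟨C a * X ^ (N + 1) + c, (natDegree_add_le _ _).trans ?_, ?_⟩
    · exact max_le (natDegree_C_mul_X_pow_le _ _) (by omega)
    · simp only [P, paramSkew, add_comp, mul_comp, C_comp, one_comp] at hcG ⊢
      linear_combination hcG

variable (k) in
def conicPoly : k[X][X] := (X - C X) ^ 2 - 2 * (X + C X) - 3

variable (k) in
def conicParam : k[X][X] →+* k[X] := eval₂RingHom (compRingHom (paramR k)) (paramL k)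

theorem conicParam_C (a : k[X]) : conicParam k (C a) = a.comp (paramR k) := by
  simp [conicParam, compRingHom, comp]

theorem conicParam_X : conicParam k X = paramL k := by
  simp [conicParam]

theorem conicParam_map_C (w : k[X]) : conicParam k (w.map C) = w.comp (paramL k) := by
  simp [conicParam, eval₂_map, compRingHom, comp]

theorem conicParam_conicPoly [CharZero k] : conicParam k (conicPoly k) = 0 := by
  have h : (4 : k[X]) * C (3 / 4) = 3 := by
    rw [← C_ofNat, ← C_mul, ← C_ofNat]; norm_num
  simp only [conicPoly, map_sub, map_pow, map_mul, map_add, map_ofNat, conicParam_C, conicParam_X,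
    X_comp, paramL, paramR]
  linear_combination h

theorem monic_conicPoly : (conicPoly k).Monic := by unfold conicPoly; monicity!

theorem natDegree_conicPoly : (conicPoly k).natDegree = 2 := by
  unfold conicPoly; compute_degree!

theorem eq_zero_of_comp_paramR_eq_zero {a : k[X]} (h : a.comp (paramR k) = 0) : a = 0 := by
  rcases comp_eq_zero_iff.mp h with h | ⟨-, h⟩
  · exact h
  · simpa [natDegree_paramR] using congrArg natDegree h

/-- Reflecting `s ↦ 1 - s` fixes `paramR` and moves `paramL` by `4s - 2`, which separates the
two coefficients of a polynomial of degree `≤ 1`. -/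
theorem eq_zero_of_natDegree_le_one_of_conicParam_eq_zero [CharZero k] {A : k[X][X]}
    (hA : A.natDegree ≤ 1) (h : conicParam k A = 0) : A = 0 := by
  rw [eq_X_add_C_of_natDegree_le_one hA, map_add, map_mul, conicParam_C, conicParam_C,
    conicParam_X] at h
  have h' := congrArg (·.comp (1 - X)) h
  simp only [add_comp, mul_comp, comp_assoc, paramR_comp_one_sub_X, zero_comp] at h'
  have h4 : (4 * X - 2 : k[X]) ≠ 0 := fun h0 => by simpa using congrArg (coeff · 1) h0
  have h1 : (A.coeff 1).comp (paramR k) = 0 := by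
    refine (mul_eq_zero.mp ?_).resolve_right h4
    rw [← paramL_sub_paramL_comp_one_sub_X]
    linear_combination h - h'
  have h0 : (A.coeff 0).comp (paramR k) = 0 := by simpa [h1] using h
  rw [eq_X_add_C_of_natDegree_le_one hA, eq_zero_of_comp_paramR_eq_zero h1,
    eq_zero_of_comp_paramR_eq_zero h0]
  simp

end ParamConic

section Sl2StdRep

/-- The defining relations of `U(sl₂ ⋉ V)`, oriented as rewrite rules towards the ordering
`x, y < f < e < h` of PBW monomials. -/
structure IsSl2StdRep {R : Type*} [Ring R] (e f h x y : R) : Prop where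
  he : h * e = e * h + 2 • e
  hf : h * f = f * h - 2 • f
  ef : e * f = f * e + h
  ex : e * x = x * e
  ey : e * y = y * e + x
  fx : f * x = x * f + y
  fy : f * y = y * f
  hx : h * x = x * h + x
  hy : h * y = y * h - y

theorem isSl2StdRep_hecke : IsSl2StdRep (eH k p) (fH k p) (hH k p) (xH k p) (yH k p) where
  he := by simpa [eH, hH, sub_eq_iff_eq_add, add_comm, map_ofNat, ← sub_eq_add_neg]
    using RingQuot.mkAlgHom_rel k (Rel.he (p := p))
  hf := by simpa [fH, hH, sub_eq_iff_eq_add, add_comm, map_ofNat, ← sub_eq_add_neg]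
    using RingQuot.mkAlgHom_rel k (Rel.hf (p := p))
  ef := by simpa [eH, fH, hH, sub_eq_iff_eq_add, add_comm]
    using RingQuot.mkAlgHom_rel k (Rel.ef (p := p))
  ex := by simpa [eH, xH, sub_eq_zero] using RingQuot.mkAlgHom_rel k (Rel.ex (p := p))
  ey := by simpa [eH, xH, yH, sub_eq_iff_eq_add, add_comm]
    using RingQuot.mkAlgHom_rel k (Rel.ey (p := p))
  fx := by simpa [fH, xH, yH, sub_eq_iff_eq_add, add_comm]
    using RingQuot.mkAlgHom_rel k (Rel.fxr (p := p))
  fy := by simpa [fH, yH, sub_eq_zero] using RingQuot.mkAlgHom_rel k (Rel.fyr (p := p))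
  hx := by simpa [hH, xH, sub_eq_iff_eq_add, add_comm]
    using RingQuot.mkAlgHom_rel k (Rel.hx (p := p))
  hy := by simpa [hH, yH, sub_eq_iff_eq_add, add_comm, map_ofNat, ← sub_eq_add_neg]
    using RingQuot.mkAlgHom_rel k (Rel.hy (p := p))

theorem ΔH_eq : ΔH k p = hH k p * hH k p + 4 • (eH k p * fH k p) - 2 • hH k p := by
  simp [ΔH, fΔ, hH, eH, fH, map_ofNat]

end Sl2StdRep

section Sandwich

variable {k} {R : Type*} [Ring R] [Algebra k R]

variable (k) in
/-- The outer variable acts by left multiplication by `D`, coefficients by right multiplication: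
`sandwich k D (∑ Xⁱ C aᵢ) v = ∑ Dⁱ v aᵢ(D)`. -/
def sandwich (D : R) : k[X][X] →+* Module.End k R :=
  eval₂RingHom' ((Module.toModuleEnd k (S := Rᵐᵒᵖ) R).comp (aeval (MulOpposite.op D)).toRingHom)
    (LinearMap.mulLeft k D) fun q => by ext v; simp [aeval_op_apply, mul_assoc]

theorem sandwich_C_apply (D : R) (q : k[X]) (v : R) : sandwich k D (C q) v = v * aeval D q := by
  simp [sandwich, aeval_op_apply]

theorem sandwich_X_apply (D v : R) : sandwich k D X v = D * v := by
  simp [sandwich]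

theorem sandwich_map_C_apply (D : R) (w : k[X]) (v : R) :
    sandwich k D (w.map C) v = aeval D w * v := by
  induction w using Polynomial.induction_on' with
  | add a b ha hb => simp [Polynomial.map_add, ha, hb, add_mul]
  | monomial n a => simp [sandwich, Algebra.commutes, mul_assoc]

theorem sandwich_map_C_mul_C_apply (D : R) (w w' : k[X]) (v : R) :
    sandwich k D (w.map C * C w') v = aeval D w * v * aeval D w' := by
  rw [mul_comm, map_mul, Module.End.mul_apply, sandwich_map_C_apply, sandwich_C_apply]

theorem sandwich_conicPoly_apply (D v : R) :
    sandwich k D (conicPoly k) v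
      = D * (D * v) - 2 • (D * v * D) + v * D * D - 2 • (D * v) - 2 • (v * D) - 3 • v := by
  simp only [conicPoly, map_sub, map_add, map_mul, map_ofNat, sq, Module.End.mul_apply,
    LinearMap.sub_apply, LinearMap.add_apply, sandwich_C_apply, sandwich_X_apply,
    Module.End.ofNat_apply, aeval_X]
  noncomm_ring

theorem IsSl2StdRep.sandwich_conicPoly_eq_zero {e f h x y D : R} (H : IsSl2StdRep e f h x y)
    (hD : D = h * h + 4 • (e * f) - 2 • h) : sandwich k D (conicPoly k) x = 0 := by
  have mul_mul_of_mul_eq {a b c : R} (hab : a * b = c) (t : R) : a * (b * t) = c * t := by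
    rw [← mul_assoc, hab]
  rw [sandwich_conicPoly_apply, hD]
  simp only [mul_add, add_mul, mul_sub, sub_mul, smul_mul_assoc, mul_smul_comm, smul_add, smul_sub,
    smul_smul, mul_assoc, H.he, H.ef, H.ex, H.hx, mul_mul_of_mul_eq H.he,
    mul_mul_of_mul_eq H.hf, mul_mul_of_mul_eq H.ef, mul_mul_of_mul_eq H.ex, mul_mul_of_mul_eq H.ey,
    mul_mul_of_mul_eq H.fx, mul_mul_of_mul_eq H.fy, mul_mul_of_mul_eq H.hx, mul_mul_of_mul_eq H.hy]
  abel

/-- The kernel of `conicParam k` is generated by the monic `conicPoly k`. -/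
theorem sandwich_eq_zero_of_conicParam_eq_zero [CharZero k] {D x : R}
    (hx : sandwich k D (conicPoly k) x = 0) {A : k[X][X]} (hA : conicParam k A = 0) :
    sandwich k D A x = 0 := by
  have hmod : A %ₘ conicPoly k = 0 := by
    refine eq_zero_of_natDegree_le_one_of_conicParam_eq_zero ?_ ?_
    · have hne : conicPoly k ≠ 1 := fun h => by simpa [h] using natDegree_conicPoly (k := k)
      have := natDegree_modByMonic_lt A monic_conicPoly hne
      rw [natDegree_conicPoly] at this
      omega
    · have := congrArg (conicParam k) (modByMonic_add_div A (conicPoly k))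
      rwa [map_add, map_mul, conicParam_conicPoly, zero_mul, add_zero, hA] at this
  rw [← modByMonic_add_div A (conicPoly k), hmod, zero_add, mul_comm, map_mul,
    Module.End.mul_apply, hx, map_zero]

theorem exists_aeval_mul_sub_mul_aeval_eq [CharZero k] {D x : R}
    (hx : sandwich k D (conicPoly k) x = 0) (w w' : k[X]) {m n : ℕ} (hmn : 1 ≤ m + n)
    (hw : w.natDegree ≤ m) (hw' : w'.natDegree ≤ n) :
    ∃ w₀ : k[X], w₀.natDegree ≤ m + n ∧
      w₀.coeff (m + n) = w.coeff m * w'.coeff n * ((m : k) - n) / ((m : k) + n) ∧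
      aeval D w₀ * x - x * aeval D w₀
        = aeval D w * x * aeval D w' - aeval D w' * x * aeval D w := by
  obtain ⟨c, hc, hcF⟩ := exists_paramSkew_eq (m + n) (paramSkew_comp_neg_X w w')
    (natDegree_paramSkew_le hw hw')
  refine ⟨c, hc, ?_, ?_⟩
  · have h := congrArg (coeff · (2 * (m + n) - 1)) hcF
    rw [coeff_paramSkew hmn hw hw', show 2 * (m + n) - 1 = 2 * (m + n + 0) - 1 by rfl,
      coeff_paramSkew (by omega) hc natDegree_one.le, coeff_one_zero, Nat.cast_add, Nat.cast_zero,
      sub_zero, mul_one] at h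
    have hmn' : ((m : k) + n) ≠ 0 := by exact_mod_cast (by omega : m + n ≠ 0)
    field_simp
    linear_combination h / 2
  · have hθ : conicParam k ((c.map C * C 1 - (1 : k[X]).map C * C c)
        - (w.map C * C w' - w'.map C * C w)) = 0 := by
      simp only [map_sub, map_mul, conicParam_map_C, conicParam_C]
      exact sub_eq_zero.mpr hcF
    have h := sandwich_eq_zero_of_conicParam_eq_zero hx hθ
    simp only [map_sub, LinearMap.sub_apply, sandwich_map_C_mul_C_apply, sandwich_map_C_apply,
      sandwich_C_apply, map_one, Polynomial.map_one, mul_one, one_mul, sub_eq_zero] at h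
    exact h

end Sandwich

theorem central_z0_exists [CharZero k] (p : Polynomial k) :
    (∀ pw pw' : Polynomial k, ∃ pw0 : Polynomial k,
        Polynomial.aeval (ΔH k p) pw0 * xH k p - xH k p * Polynomial.aeval (ΔH k p) pw0
          = Polynomial.aeval (ΔH k p) pw * xH k p * Polynomial.aeval (ΔH k p) pw'
            - Polynomial.aeval (ΔH k p) pw' * xH k p * Polynomial.aeval (ΔH k p) pw) ∧
    (∀ (pw pw' : Polynomial k) (m n : ℕ), 1 ≤ m + n →
        pw.natDegree ≤ m → pw'.natDegree ≤ n →
        ∃ pw0 : Polynomial k,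
          pw0.natDegree ≤ m + n ∧
          pw0.coeff (m + n) = pw.coeff m * pw'.coeff n * ((m : k) - n) / ((m : k) + n) ∧
          Polynomial.aeval (ΔH k p) pw0 * xH k p - xH k p * Polynomial.aeval (ΔH k p) pw0
            = Polynomial.aeval (ΔH k p) pw * xH k p * Polynomial.aeval (ΔH k p) pw'
              - Polynomial.aeval (ΔH k p) pw' * xH k p * Polynomial.aeval (ΔH k p) pw) := by
  have hx : sandwich k (ΔH k p) (conicPoly k) (xH k p) = 0 :=
    (isSl2StdRep_hecke k p).sandwich_conicPoly_eq_zero (ΔH_eq k p)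
  refine ⟨fun w w' => ?_, fun w w' m n hmn => exists_aeval_mul_sub_mul_aeval_eq hx w w' hmn⟩
  obtain ⟨w₀, -, -, h⟩ := exists_aeval_mul_sub_mul_aeval_eq hx w w' (m := w.natDegree + 1)
    (by omega) (by omega) le_rfl
  exact ⟨w₀, h⟩

end InfHecke

end
end
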